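/- arXiv:1904.05074 — 2 statements merged into one kernel-verified Lean document; each statement's English description precedes it below -/
import Mathlib

section
/- In the local model above (σ(t) = t/(1+t^n)^{1/n}, p ∤ n, I = t^a k[[t]]), the classes of t^i in coker(L^{Z/p} → (L/I)^{Z/p}) vanish for all i with a − n ≤ i ≤ a − 1 and p | i. -/
/-! With `u = x / t^p`, the hypotheses say `u ≡ 1 mod t` and `u⁻ⁿ = 1 - t^{n(p-1)}`. For
`y ≡ 1 mod t` and `p ∤ n` the geometric sum `1 + y + ⋯ + y^{n-1} ≡ n mod t` is a unit, so `yⁿ - 1`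
and `y - 1` have the same valuation; with `y = u⁻¹` this gives `v(u - 1) = n(p-1) ≥ n`. Hence for
`i = pm` the `σ`-invariant element `x^m = t^i u^m` agrees with `t^i` modulo `t^{i+n}`, and
`t^{i+n} ∈ t^a k[[t]]`. -/

open Finset WithZero

namespace Valuation

variable {R K Γ₀ : Type*} [LinearOrderedCommGroupWithZero Γ₀]

section Ring

variable [Ring R] (v : Valuation R Γ₀) {u : R}

theorem map_eq_one_of_sub_one_lt (hu : v (u - 1) < 1) : v u = 1 := by
  simpa using v.map_one_add_of_lt hu

theorem map_pow_sub_one_le (hu : v u ≤ 1) (j : ℕ) : v (u ^ j - 1) ≤ v (u - 1) := by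
  induction j with
  | zero => simp
  | succ j ih =>
    calc v (u ^ (j + 1) - 1) = v (u * (u ^ j - 1) + (u - 1)) := by
          rw [pow_succ', mul_sub, mul_one, sub_add_sub_cancel]
      _ ≤ max (v (u * (u ^ j - 1))) (v (u - 1)) := v.map_add _ _
      _ ≤ v (u - 1) := max_le (by rw [map_mul]; exact mul_le_of_le_one_of_le hu ih) le_rfl

theorem map_geom_sum_eq_one {n : ℕ} (hu : v (u - 1) < 1) (hn : v n = 1) :
    v (∑ j ∈ range n, u ^ j) = 1 := by
  have hsum : v (∑ j ∈ range n, (u ^ j - 1)) < v n := hn ▸ v.map_sum_lt one_ne_zero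
    fun j _ ↦ (v.map_pow_sub_one_le (v.map_eq_one_of_sub_one_lt hu).le j).trans_lt hu
  rw [← hn, ← v.map_add_eq_of_lt_left hsum, sum_sub_distrib]
  simp

theorem map_pow_sub_one_eq {n : ℕ} (hu : v (u - 1) < 1) (hn : v n = 1) :
    v (u ^ n - 1) = v (u - 1) := by
  rw [← geom_sum_mul, map_mul, v.map_geom_sum_eq_one hu hn, one_mul]

end Ring

section Field

variable [Field K] (v : Valuation K Γ₀)

theorem map_inv_sub_one {u : K} (hu : v u = 1) : v (u⁻¹ - 1) = v (u - 1) := by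
  have hu0 : u ≠ 0 := by rintro rfl; simp at hu
  have : u⁻¹ - 1 = -u⁻¹ * (u - 1) := by
    rw [neg_mul, mul_sub, inv_mul_cancel₀ hu0, mul_one]
    abel
  rw [this, map_mul, map_neg, map_inv₀, hu, inv_one, one_mul]

theorem map_zpow_sub_one_le {u : K} (hu : v (u - 1) < 1) (m : ℤ) :
    v (u ^ m - 1) ≤ v (u - 1) := by
  have hu1 := v.map_eq_one_of_sub_one_lt hu
  obtain ⟨j, rfl | rfl⟩ := m.eq_nat_or_neg
  · simpa using v.map_pow_sub_one_le hu1.le j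
  · rw [zpow_neg, zpow_natCast, v.map_inv_sub_one (by rw [map_pow, hu1, one_pow])]
    exact v.map_pow_sub_one_le hu1.le j

theorem map_div_sub_one_lt_one {a b : K} (h : v (b - a) < v a) : v (b / a - 1) < 1 := by
  have ha : a ≠ 0 := by rintro rfl; simp at h
  rw [div_sub_one ha, map_div₀]
  exact (div_lt_one₀ (h.trans_le' zero_le)).mpr h

end Field

end Valuation

theorem inv_div_pow_eq_one_sub {F : Type*} [Field F] {t x : F} (ht : t ≠ 0) {p n : ℕ}
    (h : x ^ (-(n : ℤ)) = t ^ (-((n * p : ℕ) : ℤ)) - t ^ (-(n : ℤ))) :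
    (x / t ^ (p : ℤ))⁻¹ ^ n = 1 - t ^ ((n : ℤ) * (p - 1)) := by
  rw [inv_div, div_eq_mul_inv, mul_pow, ← zpow_natCast, ← zpow_natCast, inv_zpow', h, mul_sub,
    ← zpow_mul, ← zpow_add₀ ht, ← zpow_add₀ ht]
  push_cast
  rw [show (p : ℤ) * n + -(n * p) = 0 by ring, show (p : ℤ) * n + -n = n * (p - 1) by ring,
    zpow_zero]

namespace LaurentSeries

variable {K : Type*} [Field K]

theorem valuation_single_one_zpow (j : ℤ) :
    Valued.v ((HahnSeries.single 1 1 : K⸨X⸩) ^ j) = exp (-j) := by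
  rw [map_zpow₀, valuation_single_zpow, ← exp_zsmul]
  simp

theorem valuation_natCast {n : ℕ} (hn : (n : K) ≠ 0) : Valued.v (n : K⸨X⸩) = 1 := by
  rw [← map_natCast (algebraMap (PowerSeries K) K⸨X⸩), valuation_def,
    IsDedekindDomain.HeightOneSpectrum.valuation_of_algebraMap,
    IsDedekindDomain.HeightOneSpectrum.intValuation_eq_one_iff]
  simpa [PowerSeries.idealX, Ideal.mem_span_singleton, PowerSeries.X_dvd_iff] using hn

theorem valuation_div_zpow_sub_one_lt_one {x : K⸨X⸩} {d : ℤ}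
    (hx : ∀ j : ℤ, j < d + 1 → (x - HahnSeries.single 1 1 ^ d).coeff j = 0) :
    Valued.v (x / HahnSeries.single 1 1 ^ d - 1) < 1 :=
  Valued.v.map_div_sub_one_lt_one <| ((valuation_le_iff_coeff_lt_eq_zero K).mpr hx).trans_lt
    (by rw [valuation_single_one_zpow, exp_lt_exp]; omega)

theorem valuation_div_zpow_sub_one_eq {p n : ℕ} [CharP K p] (hn : ¬ p ∣ n)
    {x : K⸨X⸩} (hrel : x ^ (-(n : ℤ)) = HahnSeries.single 1 1 ^ (-((n * p : ℕ) : ℤ)) -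
      HahnSeries.single 1 1 ^ (-(n : ℤ)))
    (hx : ∀ j : ℤ, j < (p : ℤ) + 1 → (x - HahnSeries.single 1 1 ^ (p : ℤ)).coeff j = 0) :
    Valued.v (x / HahnSeries.single 1 1 ^ (p : ℤ) - 1) = exp (-((n : ℤ) * (p - 1))) := by
  have hclose := valuation_div_zpow_sub_one_lt_one hx
  have hinv := Valued.v.map_inv_sub_one (Valued.v.map_eq_one_of_sub_one_lt hclose)
  have hn' : Valued.v (n : K⸨X⸩) = 1 :=
    valuation_natCast ((CharP.cast_eq_zero_iff K p n).not.mpr hn)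
  rw [← hinv, ← Valued.v.map_pow_sub_one_eq (hinv ▸ hclose) hn',
    inv_div_pow_eq_one_sub (by simp) hrel, sub_sub_cancel_left, Valuation.map_neg,
    valuation_single_one_zpow]

end LaurentSeries

theorem stmt_11_general {k : Type} [Field k] (p n : ℕ) [Fact p.Prime] [CharP k p]
    (hn : ¬ p ∣ n)
    (t : LaurentSeries k) (ht : t = HahnSeries.single (1 : ℤ) (1 : k))
    (σ : LaurentSeries k ≃ₐ[k] LaurentSeries k)
    (x : LaurentSeries k) (hx : σ x = x)
    (hrel : x ^ (-(n : ℤ)) = t ^ (-((n * p : ℕ) : ℤ)) - t ^ (-(n : ℤ)))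
    (hxt : ∀ j : ℤ, j < (p : ℤ) + 1 → (x - t ^ (p : ℤ)).coeff j = 0)
    (a : ℤ) :
    ∀ i : ℤ, a - n ≤ i → i ≤ a - 1 → (p : ℤ) ∣ i →
      ∃ f : LaurentSeries k, σ f = f ∧ ∀ j : ℤ, j < a → (f - t ^ i).coeff j = 0 := by
  subst ht
  rintro _ hi - ⟨m, rfl⟩
  refine ⟨x ^ m, by rw [map_zpow₀, hx], (LaurentSeries.valuation_le_iff_coeff_lt_eq_zero k).mp ?_⟩
  set u := x / HahnSeries.single 1 1 ^ (p : ℤ)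
  have hx_eq : x = HahnSeries.single 1 1 ^ (p : ℤ) * u := by
    rw [mul_div_cancel₀ _ (zpow_ne_zero _ (by simp))]
  have hp : (1 : ℤ) ≤ p - 1 := by have := (Fact.out : p.Prime).two_le; omega
  calc Valued.v (x ^ m - HahnSeries.single 1 1 ^ ((p : ℤ) * m))
      = exp (-((p : ℤ) * m)) * Valued.v (u ^ m - 1) := by
        rw [hx_eq, mul_zpow, ← zpow_mul, ← mul_sub_one, map_mul,
          LaurentSeries.valuation_single_one_zpow]
    _ ≤ exp (-((p : ℤ) * m)) * exp (-((n : ℤ) * (p - 1))) := by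
        rw [← LaurentSeries.valuation_div_zpow_sub_one_eq hn hrel hxt]
        exact mul_le_mul_right
          (Valued.v.map_zpow_sub_one_le (LaurentSeries.valuation_div_zpow_sub_one_lt_one hxt) m) _
    _ ≤ exp (-a) := by
        rw [← exp_add, exp_le_exp]
        nlinarith

/-- In the local `ℤ/p`-model (`σ(t) = t/(1+tⁿ)^{1/n}`, `p ∤ n`, `I = t^a·k[[t]]`,
`K = L^{ℤ/p} = k((x))` with `t^{-np} − t^{-n} = x^{-n}` and `x ≡ t^p mod t^{p+1}`),
the class of `tⁱ` in `coker(L^{ℤ/p} → (L/I)^{ℤ/p})` vanishes for all `i` with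
`a − n ≤ i ≤ a − 1` and `p ∣ i`: there is a `σ`-invariant `f ∈ L` (namely `x^{i/p}`)
with `f ≡ tⁱ mod t^a·k[[t]]`. -/
theorem stmt_11 {k : Type} [Field k] (p n : ℕ) [Fact p.Prime] [CharP k p]
    (hn : ¬ p ∣ n) (hn0 : 0 < n)
    (t : LaurentSeries k) (ht : t = HahnSeries.single (1 : ℤ) (1 : k))
    (σ : LaurentSeries k ≃ₐ[k] LaurentSeries k) (hσp : σ ^ p = 1)
    (x : LaurentSeries k) (hx : σ x = x)
    (hrel : x ^ (-(n : ℤ)) = t ^ (-((n * p : ℕ) : ℤ)) - t ^ (-(n : ℤ)))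
    (hxt : ∀ j : ℤ, j < (p : ℤ) + 1 → (x - t ^ (p : ℤ)).coeff j = 0)
    (a : ℤ) :
    ∀ i : ℤ, a - n ≤ i → i ≤ a - 1 → (p : ℤ) ∣ i →
      ∃ f : LaurentSeries k, σ f = f ∧ ∀ j : ℤ, j < a → (f - t ^ i).coeff j = 0 :=
  stmt_11_general p n hn t ht σ x hx hrel hxt a
end

section
/- Let E be the elliptic curve y² + y = x³ over an algebraically closed field k of characteristic 2, with V = H¹_dR(E/k) two-dimensional with basis v₁, v₂, and let the group A = {(u,r,t) : u ∈ F₄^×, t ∈ F₄, t² + t + r³ = 0} act on V by g_{u,r,t}·v₁ = u²v₁ and g_{u,r,t}·v₂ = u²t·v₁ + u·v₂. Then V has exactly one nonzero proper A-invariant subspace, namely span(v₁); in particular V is an indecomposable k[A]-module. -/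
/-- The action of `g_{u,r,t}` on `H¹_dR(E/k)` in the basis `v₁ = (1,0)`, `v₂ = (0,1)`:
`v₁ ↦ u²·v₁`, `v₂ ↦ u²t·v₁ + u·v₂`. -/
noncomputable def dRAction (k : Type*) [Field k] (u t : k) : (k × k) →ₗ[k] (k × k) where
  toFun v := (u ^ 2 * v.1 + u ^ 2 * t * v.2, u * v.2)
  map_add' v w := by
    apply Prod.ext <;> simp <;> ring
  map_smul' c v := by
    apply Prod.ext <;> simp <;> ring

/-- A subspace `W ⊆ H¹_dR(E/k)` is `A`-invariant if it is preserved by every `g_{u,r,t}`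
with `u ∈ 𝔽₄ˣ` (i.e. `u³ = 1`), `r, t ∈ 𝔽₄` (i.e. `r⁴ = r`, `t⁴ = t`) and `t² + t + r³ = 0`. -/
def dRInvariant (k : Type*) [Field k] (W : Submodule k (k × k)) : Prop :=
  ∀ u r t : k, u ^ 3 = 1 → r ^ 4 = r → t ^ 4 = t → t ^ 2 + t + r ^ 3 = 0 →
    ∀ v ∈ W, dRAction k u t v ∈ W


/- The single element `g_{1,0,1}` of `A` already pins everything down: `g_{1,0,1} - 1` is the
nilpotent map `(a, b) ↦ (b, 0)`, so an invariant subspace containing a vector with nonzero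
second coordinate contains `v₁`, hence also `v₂`. The invariant subspaces are therefore `⊥`,
`span(v₁)` and `⊤`, and two nonzero invariant subspaces can never be complementary. -/

open Submodule

section
variable {k : Type*} [Field k]

lemma mem_span_fst_iff {v : k × k} : v ∈ k ∙ ((1 : k), (0 : k)) ↔ v.2 = 0 := by
  rw [mem_span_singleton]
  refine ⟨fun ⟨a, ha⟩ ↦ by simp [← ha], fun h ↦ ⟨v.1, Prod.ext (by simp) (by simp [h])⟩⟩

lemma span_fst_ne_bot : k ∙ ((1 : k), (0 : k)) ≠ ⊥ := by
  simp

lemma span_fst_ne_top : k ∙ ((1 : k), (0 : k)) ≠ ⊤ := by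
  intro h
  have : ((0 : k), (1 : k)) ∈ k ∙ ((1 : k), (0 : k)) := h ▸ mem_top
  simp [mem_span_fst_iff] at this

lemma dRInvariant_span_fst : dRInvariant k (k ∙ ((1 : k), (0 : k))) := by
  intro u _ t _ _ _ _ v hv
  rw [mem_span_fst_iff] at hv ⊢
  simp [dRAction, hv]

lemma dRAction_one_one_sub_self (v : k × k) : dRAction k 1 1 v - v = (v.2, 0) := by
  ext <;> simp [dRAction]

lemma eq_top_of_fst_mem {W : Submodule k (k × k)} (h : ((1 : k), (0 : k)) ∈ W) {v : k × k}
    (hv : v ∈ W) (hv₂ : v.2 ≠ 0) : W = ⊤ := by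
  refine eq_top_iff'.mpr fun x ↦ ?_
  have hx : x = (x.1 - x.2 / v.2 * v.1) • ((1 : k), (0 : k)) + (x.2 / v.2) • v := by
    ext <;>
      simp only [Prod.fst_add, Prod.snd_add, Prod.smul_fst, Prod.smul_snd, smul_eq_mul] <;>
      field_simp <;> ring
  rw [hx]
  exact add_mem (smul_mem _ _ h) (smul_mem _ _ hv)

lemma fst_mem_of_snd_eq_zero {W : Submodule k (k × k)} {v : k × k} (hv : v ∈ W)
    (hv₀ : v ≠ 0) (hv₂ : v.2 = 0) : ((1 : k), (0 : k)) ∈ W := by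
  have hv₁ : v.1 ≠ 0 := fun h ↦ hv₀ (Prod.ext h hv₂)
  have : v.1⁻¹ • v = ((1 : k), (0 : k)) := by
    ext <;> simp [hv₁, hv₂]
  exact this ▸ smul_mem _ _ hv

variable [CharP k 2]

lemma dRInvariant.le_span_fst {W : Submodule k (k × k)} (hW : dRInvariant k W) (htop : W ≠ ⊤) :
    W ≤ k ∙ ((1 : k), (0 : k)) := by
  intro v hv
  rw [mem_span_fst_iff]
  by_contra hv₂
  have h2 : (2 : k) = 0 := CharTwo.two_eq_zero
  have hgv : dRAction k 1 1 v ∈ W :=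
    hW 1 0 1 (by norm_num) (by norm_num) (by norm_num) (by linear_combination h2) v hv
  have hNv : ((v.2, 0) : k × k) ∈ W := dRAction_one_one_sub_self v ▸ sub_mem hgv hv
  exact htop <| eq_top_of_fst_mem
    (fst_mem_of_snd_eq_zero hNv (by simpa using hv₂) rfl) hv hv₂

lemma dRInvariant.eq_span_fst {W : Submodule k (k × k)} (hW : dRInvariant k W) (hbot : W ≠ ⊥)
    (htop : W ≠ ⊤) : W = k ∙ ((1 : k), (0 : k)) := by
  have hle := hW.le_span_fst htop
  obtain ⟨v, hv, hv₀⟩ := exists_mem_ne_zero_of_ne_bot hbot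
  refine hle.antisymm ((span_singleton_le_iff_mem _ _).mpr ?_)
  exact fst_mem_of_snd_eq_zero hv hv₀ (mem_span_fst_iff.mp (hle hv))

end

theorem stmt_16_general (k : Type*) [Field k] [CharP k 2] :
    ({W : Submodule k (k × k) | dRInvariant k W ∧ W ≠ ⊥ ∧ W ≠ ⊤} =
        {Submodule.span k {((1 : k), (0 : k))}}) ∧
      ¬ ∃ W₁ W₂ : Submodule k (k × k), dRInvariant k W₁ ∧ dRInvariant k W₂ ∧
        IsCompl W₁ W₂ ∧ W₁ ≠ ⊥ ∧ W₂ ≠ ⊥ := by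
  refine ⟨Set.eq_singleton_iff_unique_mem.mpr
    ⟨⟨dRInvariant_span_fst, span_fst_ne_bot, span_fst_ne_top⟩,
      fun W ⟨hW, hbot, htop⟩ ↦ hW.eq_span_fst hbot htop⟩, ?_⟩
  rintro ⟨W₁, W₂, hW₁, hW₂, hcompl, hbot₁, hbot₂⟩
  have htop₁ : W₁ ≠ ⊤ := fun h ↦ hbot₂ (eq_bot_of_isCompl_top (h ▸ hcompl).symm)
  have htop₂ : W₂ ≠ ⊤ := fun h ↦ hbot₁ (eq_bot_of_isCompl_top (h ▸ hcompl))
  have hdisj := hcompl.disjoint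
  rw [hW₁.eq_span_fst hbot₁ htop₁, hW₂.eq_span_fst hbot₂ htop₂, disjoint_self] at hdisj
  exact span_fst_ne_bot hdisj

/-- Let `E : y² + y = x³` over an algebraically closed field `k` of characteristic `2`, with
`V = H¹_dR(E/k)` two-dimensional with basis `v₁, v₂`, and the group
`A = {(u,r,t) : u ∈ 𝔽₄ˣ, t ∈ 𝔽₄, t² + t + r³ = 0}` acting by `g_{u,r,t}·v₁ = u²v₁`,
`g_{u,r,t}·v₂ = u²t·v₁ + u·v₂`.  Then `V` has exactly one nonzero proper `A`-invariant
subspace, namely `span(v₁)`; in particular `V` is an indecomposable `k[A]`-module. -/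
theorem stmt_16 (k : Type*) [Field k] [IsAlgClosed k] [CharP k 2] :
    ({W : Submodule k (k × k) | dRInvariant k W ∧ W ≠ ⊥ ∧ W ≠ ⊤} =
        {Submodule.span k {((1 : k), (0 : k))}}) ∧
      ¬ ∃ W₁ W₂ : Submodule k (k × k), dRInvariant k W₁ ∧ dRInvariant k W₂ ∧
        IsCompl W₁ W₂ ∧ W₁ ≠ ⊥ ∧ W₂ ≠ ⊥ :=
  stmt_16_general k
end
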